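/- If x = Σ_{i∈F} c_i e_i is an (n, ε)-basic special convex combination and G ⊂ F with G ∈ S_k ∗ A_3 for some k < n, then Σ_{i∈G} c_i < 3ε. -/

import Mathlib

/-!
Write `G` as a union of blocks `A₁ < ⋯ < A_d` of at most three elements whose minima form a set
`M ∈ S_k`. Sorting the elements of `G` by their position (first, second or third) inside their
block splits `G` into three sets, each meeting every block at most once. Sending each element to
the minimum of its block maps such a set strictly monotonically and downwards into `M`, so it lies
in `S_k` because Schreier families are hereditary and spreading; since `F ⊆ [1, ∞)`, it then lies
in `S_{n-1}` and carries `c`-mass less than `ε`.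
-/

/-- `A < B`: every element of `A` is less than every element of `B`. -/
def BlockLt (A B : Finset ℕ) : Prop := ∀ a ∈ A, ∀ b ∈ B, a < b

/-- The Schreier families, defined inductively. -/
def Schreier : ℕ → Set (Finset ℕ)
  | 0 => {F | ∃ i : ℕ, F = {i}}
  | n + 1 => {F | ∃ L : List (Finset ℕ), L ≠ [] ∧
      (∀ A ∈ L, A ∈ Schreier n) ∧ L.Chain' BlockLt ∧
      (∀ a ∈ L.headI, L.length ≤ a) ∧ F = L.foldr (· ∪ ·) ∅}

/-- The family `S_n ∗ A_3`. -/
def SchreierA3 (n : ℕ) : Set (Finset ℕ) :=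
  {F | ∃ L : List (Finset ℕ), L ≠ [] ∧
      (∀ A ∈ L, A.Nonempty ∧ A.card ≤ 3) ∧ L.Chain' BlockLt ∧
      (L.map fun A => sInf (A : Set ℕ)).toFinset ∈ Schreier n ∧
      F = L.foldr (· ∪ ·) ∅}

/-- `Σ_{i∈F} c i • e i` is an `(n, ε)`-basic special convex combination. -/
def IsBasicSCC (n : ℕ) (ε : ℝ) (F : Finset ℕ) (c : ℕ → ℝ) : Prop :=
  F ∈ Schreier n ∧ (∀ i ∈ F, 0 ≤ c i) ∧ (∑ i ∈ F, c i) = 1 ∧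
    ∀ G ⊆ F, G ∈ Schreier (n - 1) → (∑ i ∈ G, c i) < ε

open Finset

lemma mem_foldr_union {L : List (Finset ℕ)} {a : ℕ} :
    a ∈ L.foldr (· ∪ ·) ∅ ↔ ∃ A ∈ L, a ∈ A := by
  induction L with
  | nil => simp
  | cons B T ih => simp [ih]

lemma pairwise_blockLt_of_isChain {L : List (Finset ℕ)} (hne : ∀ A ∈ L, A.Nonempty)
    (h : L.IsChain BlockLt) : L.Pairwise BlockLt := by
  let R : Finset ℕ → Finset ℕ → Prop := fun A B => B.Nonempty ∧ BlockLt A B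
  have : Trans R R R := ⟨fun hAB hBC => ⟨hBC.1, fun a ha c hc =>
    let ⟨b, hb⟩ := hAB.1; (hAB.2 a ha b hb).trans (hBC.2 b hb c hc)⟩⟩
  have hR : L.IsChain R := h.imp_of_mem_imp fun _ B _ hB hAB => ⟨hne B hB, hAB⟩
  exact hR.pairwise.imp And.right

lemma foldr_union_inter_Icc_subset {L : List (Finset ℕ)} (hL : L.Pairwise BlockLt) {A : Finset ℕ}
    (hA : A ∈ L) {a m : ℕ} (ha : a ∈ A) (hm : ∃ y ∈ A, y ≤ m) :
    L.foldr (· ∪ ·) ∅ ∩ Icc m a ⊆ A := by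
  intro x hx
  obtain ⟨hxG, hmx, hxa⟩ := by simpa only [mem_inter, mem_Icc] using hx
  obtain ⟨B, hB, hxB⟩ := mem_foldr_union.1 hxG
  obtain ⟨y, hy, hym⟩ := hm
  have : Std.Symm fun A B : Finset ℕ => BlockLt A B ∨ BlockLt B A := ⟨fun _ _ => Or.symm⟩
  have hsymm : L.Pairwise fun A B => BlockLt A B ∨ BlockLt B A := hL.imp Or.inl
  by_contra hxA
  rcases hsymm.forall hA hB (by rintro rfl; exact hxA hxB) with hAB | hBA
  · exact absurd (hAB a ha x hxB) (not_lt.2 hxa)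
  · exact absurd (hBA x hxB y hy) (not_lt.2 (hym.trans hmx))

lemma nonempty_of_mem_schreier : ∀ {n : ℕ} {F : Finset ℕ}, F ∈ Schreier n → F.Nonempty
  | 0, _, ⟨i, hF⟩ => hF ▸ singleton_nonempty i
  | n + 1, _, ⟨L, hL, hmem, _, _, hF⟩ => by
    obtain ⟨A, hA⟩ := List.exists_mem_of_ne_nil L hL
    obtain ⟨a, ha⟩ := nonempty_of_mem_schreier (hmem A hA)
    exact ⟨a, hF ▸ mem_foldr_union.2 ⟨A, hA, ha⟩⟩

lemma singleton_mem_schreier_zero (i : ℕ) : {i} ∈ Schreier 0 := ⟨i, rfl⟩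

lemma mem_schreier_succ_iff {n : ℕ} {F : Finset ℕ} :
    F ∈ Schreier (n + 1) ↔ ∃ L : List (Finset ℕ), L ≠ [] ∧ (∀ A ∈ L, A ∈ Schreier n) ∧
      L.Pairwise BlockLt ∧ (∀ A ∈ L, ∀ a ∈ A, L.length ≤ a) ∧ F = L.foldr (· ∪ ·) ∅ := by
  constructor
  · rintro ⟨L, hL, hmem, hch, hhead, rfl⟩
    have hP := pairwise_blockLt_of_isChain (fun A hA => nonempty_of_mem_schreier (hmem A hA)) hch
    refine ⟨L, hL, hmem, hP, ?_, rfl⟩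
    obtain ⟨H, T, rfl⟩ := List.exists_cons_of_ne_nil hL
    intro A hA a ha
    rcases List.mem_cons.1 hA with rfl | hAT
    · exact hhead a ha
    · obtain ⟨h, hh⟩ := nonempty_of_mem_schreier (hmem H List.mem_cons_self)
      exact (hhead h hh).trans (List.rel_of_pairwise_cons hP hAT h hh a ha).le
  · rintro ⟨L, hL, hmem, hP, hlen, rfl⟩
    refine ⟨L, hL, hmem, hP.isChain, ?_, rfl⟩
    obtain ⟨H, T, rfl⟩ := List.exists_cons_of_ne_nil hL
    exact hlen H List.mem_cons_self

lemma one_le_of_mem_schreier_succ {n : ℕ} {F : Finset ℕ} (hF : F ∈ Schreier (n + 1)) {a : ℕ}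
    (ha : a ∈ F) : 1 ≤ a := by
  obtain ⟨L, hL, -, -, hlen, rfl⟩ := mem_schreier_succ_iff.1 hF
  obtain ⟨A, hA, haA⟩ := mem_foldr_union.1 ha
  exact (List.length_pos_iff.2 hL).trans_le (hlen A hA a haA)

lemma mem_schreier_of_le {k m : ℕ} {F : Finset ℕ} (hF : F ∈ Schreier k) (hkm : k ≤ m)
    (hpos : ∀ a ∈ F, 1 ≤ a) : F ∈ Schreier m := by
  induction m, hkm using Nat.le_induction with
  | base => exact hF
  | succ m _ ih =>
    exact mem_schreier_succ_iff.2 ⟨[F], List.cons_ne_nil _ _, by simpa using ih,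
      List.pairwise_singleton _ _, by simpa using hpos, by simp⟩

/-- Hereditarity and spreading of `S_n`, combined. -/
theorem mem_schreier_of_strictMonoOn {n : ℕ} {M S : Finset ℕ} {φ : ℕ → ℕ} (hM : M ∈ Schreier n)
    (hS : S.Nonempty) (hφ : StrictMonoOn φ S) (hφM : ∀ a ∈ S, φ a ∈ M)
    (hφle : ∀ a ∈ S, φ a ≤ a) : S ∈ Schreier n := by
  induction n generalizing M S with
  | zero =>
    obtain ⟨i, rfl⟩ := hM
    obtain ⟨a, ha⟩ := hS
    refine ⟨a, eq_singleton_iff_unique_mem.2 ⟨ha, fun b hb => hφ.injOn hb ha ?_⟩⟩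
    rw [mem_singleton.1 (hφM b hb), mem_singleton.1 (hφM a ha)]
  | succ n ih =>
    obtain ⟨L, -, hmem, hP, hlen, rfl⟩ := mem_schreier_succ_iff.1 hM
    set L' := (L.map fun A => S.filter (φ · ∈ A)).filter (·.Nonempty)
    have hmem' : ∀ {B}, B ∈ L' ↔ B.Nonempty ∧ ∃ A ∈ L, S.filter (φ · ∈ A) = B := by
      simp [L', and_comm]
    have hcover : ∀ a ∈ S, ∃ B ∈ L', a ∈ B := fun a ha => by
      obtain ⟨A, hA, hφA⟩ := mem_foldr_union.1 (hφM a ha)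
      exact ⟨_, hmem'.2 ⟨⟨a, mem_filter.2 ⟨ha, hφA⟩⟩, A, hA, rfl⟩, mem_filter.2 ⟨ha, hφA⟩⟩
    refine mem_schreier_succ_iff.2 ⟨L', ?_, ?_, ?_, ?_, ?_⟩
    · obtain ⟨a, ha⟩ := hS
      obtain ⟨B, hB, -⟩ := hcover a ha
      exact List.ne_nil_of_mem hB
    · intro B hB
      obtain ⟨hne, A, hA, rfl⟩ := hmem'.1 hB
      exact ih (hmem A hA) hne (hφ.mono (filter_subset _ _)) (fun a ha => (mem_filter.1 ha).2)
        (fun a ha => hφle a (mem_filter.1 ha).1)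
    · refine (List.pairwise_map.2 (hP.imp fun hAB a ha b hb => ?_)).filter _
      rw [mem_filter] at ha hb
      exact (hφ.lt_iff_lt ha.1 hb.1).1 (hAB _ ha.2 _ hb.2)
    · intro B hB a ha
      obtain ⟨-, A, hA, rfl⟩ := hmem'.1 hB
      obtain ⟨haS, hφA⟩ := mem_filter.1 ha
      calc L'.length ≤ L.length := (List.length_filter_le _ _).trans (List.length_map _).le
        _ ≤ φ a := hlen A hA _ hφA
        _ ≤ a := hφle a haS
    · ext a
      refine ⟨fun ha => mem_foldr_union.2 (hcover a ha), fun ha => ?_⟩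
      obtain ⟨B, hB, haB⟩ := mem_foldr_union.1 ha
      obtain ⟨-, A, -, rfl⟩ := hmem'.1 hB
      exact (mem_filter.1 haB).1

theorem IsBasicSCC.eps_pos {n : ℕ} {ε : ℝ} {F : Finset ℕ} {c : ℕ → ℝ} (h : IsBasicSCC n ε F c) :
    0 < ε := by
  obtain ⟨hF, hc, -, hsmall⟩ := h
  obtain ⟨i, hi⟩ := nonempty_of_mem_schreier hF
  have hsingle : {i} ∈ Schreier (n - 1) := by
    cases n with
    | zero => exact singleton_mem_schreier_zero i
    | succ m =>
      exact mem_schreier_of_le (singleton_mem_schreier_zero i) m.zero_le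
        (by simpa using one_le_of_mem_schreier_succ hF hi)
  have hci := hsmall {i} (singleton_subset_iff.2 hi) hsingle
  rw [sum_singleton] at hci
  exact (hc i hi).trans_lt hci

/-- The largest element of `M` that is at most `a` (`0` if there is none). -/
def floorIn (M : Finset ℕ) (a : ℕ) : ℕ := (M.filter (· ≤ a)).sup id

lemma monotone_floorIn (M : Finset ℕ) : Monotone (floorIn M) := fun _ _ hab =>
  sup_mono fun _ hx => mem_filter.2 ⟨(mem_filter.1 hx).1, (mem_filter.1 hx).2.trans hab⟩

lemma floorIn_spec {M : Finset ℕ} {a m : ℕ} (hm : m ∈ M) (hma : m ≤ a) :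
    floorIn M a ∈ M ∧ floorIn M a ≤ a ∧ m ≤ floorIn M a := by
  have hmem : m ∈ M.filter (· ≤ a) := mem_filter.2 ⟨hm, hma⟩
  obtain ⟨x, hx, hxeq⟩ := exists_mem_eq_sup _ ⟨m, hmem⟩ id
  rw [mem_filter] at hx
  refine ⟨?_, ?_, le_sup (f := id) hmem⟩ <;> rw [floorIn, hxeq, id]
  exacts [hx.1, hx.2]

lemma strictMonoOn_filter_card_inter_Ico {G : Finset ℕ} {φ : ℕ → ℕ} (hφ : Monotone φ)
    (hle : ∀ a ∈ G, φ a ≤ a) (j : ℕ) :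
    StrictMonoOn φ (G.filter fun a => #(G ∩ Ico (φ a) a) = j) := by
  intro a ha b hb hab
  rw [mem_coe, mem_filter] at ha hb
  refine (hφ hab.le).lt_of_ne fun heq => ?_
  have hlt : #(G ∩ Ico (φ a) a) < #(G ∩ Ico (φ b) b) := by
    rw [← heq]
    refine card_lt_card ((ssubset_iff_of_subset ?_).2 ⟨a, ?_, ?_⟩)
    · exact inter_subset_inter_left (Ico_subset_Ico_right hab.le)
    · simp [ha.1, hle a ha.1, hab]
    · simp
  omega

theorem exists_fibers_mem_schreier_of_mem_schreierA3 {k : ℕ} {G : Finset ℕ}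
    (hG : G ∈ SchreierA3 k) : ∃ ρ : ℕ → ℕ, (∀ a ∈ G, ρ a < 3) ∧
      ∀ j, (G.filter (ρ · = j)).Nonempty → G.filter (ρ · = j) ∈ Schreier k := by
  obtain ⟨L, -, hblocks, hch, hM, rfl⟩ := hG
  set M := (L.map fun A => sInf (A : Set ℕ)).toFinset
  have hminM : ∀ A ∈ L, sInf (A : Set ℕ) ∈ M := fun A hA => by simpa [M] using ⟨A, hA, rfl⟩
  have hne : ∀ A ∈ L, A.Nonempty := fun A hA => (hblocks A hA).1
  have hP := pairwise_blockLt_of_isChain hne hch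
  set G := L.foldr (· ∪ ·) ∅
  have hφ : ∀ a ∈ G, ∃ A ∈ L, a ∈ A ∧
      floorIn M a ∈ M ∧ floorIn M a ≤ a ∧ sInf (A : Set ℕ) ≤ floorIn M a := fun a ha => by
    obtain ⟨A, hA, haA⟩ := mem_foldr_union.1 ha
    exact ⟨A, hA, haA, floorIn_spec (hminM A hA) (Nat.sInf_le haA)⟩
  -- `floorIn M a` is the minimum of the block of `a`, so `ρ a` is the position of `a` in it.
  refine ⟨fun a => #(G ∩ Ico (floorIn M a) a), fun a ha => ?_, fun j hj => ?_⟩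
  · obtain ⟨A, hA, haA, -, hle, hmin⟩ := hφ a ha
    have hIcc : G ∩ Icc (floorIn M a) a ⊆ A :=
      foldr_union_inter_Icc_subset hP hA haA ⟨_, Nat.sInf_mem (hne A hA).to_set, hmin⟩
    calc #(G ∩ Ico (floorIn M a) a) < #(G ∩ Icc (floorIn M a) a) := by
          refine card_lt_card ((ssubset_iff_of_subset ?_).2 ⟨a, ?_, ?_⟩)
          · exact inter_subset_inter_left Ico_subset_Icc_self
          · simp [ha, hle]
          · simp
      _ ≤ #A := card_le_card hIcc
      _ ≤ 3 := (hblocks A hA).2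
  · have hfloor : ∀ a ∈ G, floorIn M a ∈ M ∧ floorIn M a ≤ a := fun a ha =>
      let ⟨_, _, _, hM, hle, _⟩ := hφ a ha; ⟨hM, hle⟩
    exact mem_schreier_of_strictMonoOn hM hj
      (strictMonoOn_filter_card_inter_Ico (monotone_floorIn M) (fun a ha => (hfloor a ha).2) j)
      (fun a ha => (hfloor a (mem_filter.1 ha).1).1) (fun a ha => (hfloor a (mem_filter.1 ha).1).2)

/-- If `Σ_{i∈F} c i e i` is an `(n, ε)`-basic scc and `G ⊆ F` with
    `G ∈ S_k ∗ A_3` for some `k < n`, then `Σ_{i∈G} c i < 3ε`. -/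
theorem stmt_2 (n k : ℕ) (hk : k < n) (ε : ℝ) (F : Finset ℕ) (c : ℕ → ℝ)
    (h : IsBasicSCC n ε F c) (G : Finset ℕ) (hGF : G ⊆ F)
    (hG : G ∈ SchreierA3 k) : (∑ i ∈ G, c i) < 3 * ε := by
  have hε := h.eps_pos
  obtain ⟨hF, -, -, hsmall⟩ := h
  obtain ⟨m, rfl⟩ : ∃ m, n = m + 1 := ⟨n - 1, by omega⟩
  obtain ⟨ρ, hρ, hfibers⟩ := exists_fibers_mem_schreier_of_mem_schreierA3 hG
  have hfiber : ∀ j, ∑ i ∈ G with ρ i = j, c i < ε := by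
    intro j
    obtain hempty | hne := (G.filter (ρ · = j)).eq_empty_or_nonempty
    · rwa [hempty, sum_empty]
    have hsub : G.filter (ρ · = j) ⊆ F := (filter_subset _ _).trans hGF
    exact hsmall _ hsub <| mem_schreier_of_le (hfibers j hne) (Nat.le_of_lt_succ hk)
      fun a ha => one_le_of_mem_schreier_succ hF (hsub ha)
  rw [← sum_fiberwise_of_maps_to (t := range 3) fun a ha => mem_range.2 (hρ a ha)]
  simp only [sum_range_succ, sum_range_zero]
  linarith [hfiber 0, hfiber 1, hfiber 2]
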